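/- arXiv:2601.09474 — 2 statements merged into one kernel-verified Lean document; each statement's English description precedes it below -/
import Mathlib

section
/- Let σ > 0 and let λ : [0,1] → ℝ be continuous with λ(t) > 0 for all t ∈ [0,1]. Define v(t) = sqrt((1−t)² + t²σ²), α(t) = v′(t)/v(t), γ = σ² ∫₀¹ (λ(t) v(t)²)⁻¹ dt, and P(t) = ( v(t)² ( σ⁻² + ∫_t^1 (λ(u) v(u)²)⁻¹ du ) )⁻¹. Then exp( ∫₀¹ ( α(t) − P(t)/λ(t) ) dt ) = σ / (1 + γ). -/
/-!
The closed-loop drift is a logarithmic derivative: with `F t = σ⁻² + ∫_t^1 (λ v²)⁻¹` one has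
`P = (v² F)⁻¹` and `F' = -(λ v²)⁻¹`, so
`α - P / λ = v' / v + F' / F = (v F)' / (v F)`.
Hence the exponential of its integral is `v 1 F 1 / (v 0 F 0) = σ σ⁻² / (σ⁻² (1 + γ))`.
-/

open Set Real intervalIntegral

theorem exp_integral_eq_div_of_hasDerivAt_mul {f φ : ℝ → ℝ} {a b : ℝ} (hab : a ≤ b)
    (hf : ContinuousOn f (Icc a b)) (hpos : ∀ x ∈ Icc a b, 0 < f x)
    (hderiv : ∀ x ∈ Ioo a b, HasDerivAt f (φ x * f x) x)
    (hφ : IntervalIntegrable φ MeasureTheory.volume a b) :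
    exp (∫ x in a..b, φ x) = f b / f a := by
  have hlog : ∫ x in a..b, φ x = log (f b) - log (f a) := by
    refine integral_eq_sub_of_hasDerivAt_of_le hab (hf.log fun x hx => (hpos x hx).ne')
      (fun x hx => ?_) hφ
    have hfx := (hpos x (Ioo_subset_Icc_self hx)).ne'
    exact ((hderiv x hx).log hfx).congr_deriv (by field_simp)
  rw [hlog, exp_sub, exp_log (hpos b (right_mem_Icc.2 hab)),
    exp_log (hpos a (left_mem_Icc.2 hab))]

theorem hasDerivAt_integral_left_of_mem_Ioo {h : ℝ → ℝ} {a b x : ℝ}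
    (hh : ContinuousOn h (Icc a b)) (hx : x ∈ Ioo a b) :
    HasDerivAt (fun t => ∫ u in t..b, h u) (-h x) x := by
  have hxb : uIcc x b ⊆ Icc a b :=
    uIcc_subset_Icc (Ioo_subset_Icc_self hx) (right_mem_Icc.2 (hx.1.trans hx.2).le)
  exact integral_hasDerivAt_left (hh.mono hxb).intervalIntegrable
    ((hh.mono Ioo_subset_Icc_self).stronglyMeasurableAtFilter isOpen_Ioo x hx)
    (hh.continuousAt (Icc_mem_nhds hx.1 hx.2))

theorem continuousOn_integral_left {h : ℝ → ℝ} {a b : ℝ} (hab : a ≤ b)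
    (hh : ContinuousOn h (Icc a b)) :
    ContinuousOn (fun t => ∫ u in t..b, h u) (Icc a b) := by
  have := continuousOn_primitive_interval_left (μ := MeasureTheory.volume)
    (by rw [uIcc_of_le hab]; exact hh.integrableOn_Icc : MeasureTheory.IntegrableOn h (uIcc a b))
  rwa [uIcc_of_le hab] at this

theorem interpolation_quadratic_pos {σ : ℝ} (hσ : σ ≠ 0) (t : ℝ) :
    0 < (1 - t) ^ 2 + t ^ 2 * σ ^ 2 := by
  rcases eq_or_ne t 0 with rfl | ht
  · norm_num
  · positivity

theorem contDiff_sqrt_interpolation_quadratic {σ : ℝ} (hσ : σ ≠ 0) :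
    ContDiff ℝ 1 (fun t => √((1 - t) ^ 2 + t ^ 2 * σ ^ 2)) :=
  (by fun_prop : ContDiff ℝ 1 (fun t : ℝ => (1 - t) ^ 2 + t ^ 2 * σ ^ 2)).sqrt
    fun t => (interpolation_quadratic_pos hσ t).ne'

theorem closedLoopDrift_mul_eq {v v' F l : ℝ} (hv : v ≠ 0) (hF : F ≠ 0) (hl : l ≠ 0) :
    (v' / v - (v ^ 2 * F)⁻¹ / l) * (v * F) = v' * F + v * -(l * v ^ 2)⁻¹ := by
  field_simp
  ring

theorem exp_integral_closedLoopDrift_eq {v lam : ℝ → ℝ} {a b c : ℝ} (hab : a ≤ b) (hc : 0 < c)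
    (hv : ContDiff ℝ 1 v) (hv_pos : ∀ t ∈ Icc a b, 0 < v t)
    (hlamc : ContinuousOn lam (Icc a b)) (hlam : ∀ t ∈ Icc a b, 0 < lam t) :
    exp (∫ t in a..b, (deriv v t / v t -
        (v t ^ 2 * (c + ∫ u in t..b, (lam u * v u ^ 2)⁻¹))⁻¹ / lam t)) =
      v b * c / (v a * (c + ∫ u in a..b, (lam u * v u ^ 2)⁻¹)) := by
  set h : ℝ → ℝ := fun u => (lam u * v u ^ 2)⁻¹
  set F : ℝ → ℝ := fun t => c + ∫ u in t..b, h u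
  have hden_pos : ∀ t ∈ Icc a b, 0 < lam t * v t ^ 2 := fun t ht =>
    mul_pos (hlam t ht) (pow_pos (hv_pos t ht) 2)
  have hh : ContinuousOn h (Icc a b) :=
    (hlamc.mul (hv.continuous.pow 2).continuousOn).inv₀ fun t ht => (hden_pos t ht).ne'
  have hF_pos : ∀ t ∈ Icc a b, 0 < F t := fun t ht => by
    have : 0 ≤ ∫ u in t..b, h u :=
      integral_nonneg ht.2 fun u hu => (inv_pos.2 (hden_pos u ⟨ht.1.trans hu.1, hu.2⟩)).le
    positivity
  have hF : ContinuousOn F (Icc a b) := continuousOn_const.add (continuousOn_integral_left hab hh)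
  have hderiv : ∀ t ∈ Ioo a b, HasDerivAt (fun t => v t * F t)
      ((deriv v t / v t - (v t ^ 2 * F t)⁻¹ / lam t) * (v t * F t)) t := by
    intro t ht
    have ht' := Ioo_subset_Icc_self ht
    refine ((hv.differentiable one_ne_zero t).hasDerivAt.mul
      ((hasDerivAt_integral_left_of_mem_Ioo hh ht).const_add c)).congr_deriv ?_
    exact (closedLoopDrift_mul_eq (hv_pos t ht').ne' (hF_pos t ht').ne' (hlam t ht').ne').symm
  have hcont :
      ContinuousOn (fun t => deriv v t / v t - (v t ^ 2 * F t)⁻¹ / lam t) (Icc a b) :=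
    ((hv.continuous_deriv le_rfl).continuousOn.div hv.continuous.continuousOn
      fun t ht => (hv_pos t ht).ne').sub <|
    (((hv.continuous.pow 2).continuousOn.mul hF).inv₀ fun t ht =>
      (mul_pos (pow_pos (hv_pos t ht) 2) (hF_pos t ht)).ne').div hlamc fun t ht => (hlam t ht).ne'
  rw [exp_integral_eq_div_of_hasDerivAt_mul hab (hv.continuous.continuousOn.mul hF)
    (fun t ht => mul_pos (hv_pos t ht) (hF_pos t ht)) hderiv (hcont.intervalIntegrable_of_Icc hab)]
  simp only [Pi.mul_apply, F, integral_same, add_zero]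

theorem closed_loop_jacobian_formula
    (σ : ℝ) (hσ : 0 < σ)
    (lam : ℝ → ℝ) (hlamc : ContinuousOn lam (Icc 0 1))
    (hlam : ∀ t ∈ Icc (0:ℝ) 1, 0 < lam t)
    (v α P : ℝ → ℝ) (γ : ℝ)
    (hv : ∀ t, v t = Real.sqrt ((1 - t) ^ 2 + t ^ 2 * σ ^ 2))
    (hα : ∀ t, α t = deriv v t / v t)
    (hγ : γ = σ ^ 2 * ∫ t in (0:ℝ)..1, (lam t * v t ^ 2)⁻¹)
    (hP : ∀ t, P t = (v t ^ 2 * ((σ ^ 2)⁻¹ + ∫ u in t..(1:ℝ), (lam u * v u ^ 2)⁻¹))⁻¹) :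
    Real.exp (∫ t in (0:ℝ)..1, (α t - P t / lam t)) = σ / (1 + γ) := by
  have hv_diff : ContDiff ℝ 1 v := funext hv ▸ contDiff_sqrt_interpolation_quadratic hσ.ne'
  have hv_pos : ∀ t, 0 < v t := fun t =>
    hv t ▸ sqrt_pos.2 (interpolation_quadratic_pos hσ.ne' t)
  have hv0 : v 0 = 1 := by simp [hv]
  have hv1 : v 1 = σ := by simp [hv, sqrt_sq hσ.le]
  simp only [hα, hP]
  rw [exp_integral_closedLoopDrift_eq zero_le_one (by positivity) hv_diff (fun t _ => hv_pos t)
    hlamc hlam, hv0, hv1, hγ]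
  field_simp
end

section
/- Let σ > 0, μ ∈ ℝ, and let λ : [0,1] → ℝ be continuous with λ(t) > 0 for all t ∈ [0,1]. Define v(t) = sqrt((1−t)² + t²σ²), α(t) = v′(t)/v(t), β(t) = μ(1 − t α(t)), r(t) = −μ(v(t)/σ − t), γ = σ² ∫₀¹ (λ(t) v(t)²)⁻¹ dt, and P(t) = ( v(t)² ( σ⁻² + ∫_t^1 (λ(u) v(u)²)⁻¹ du ) )⁻¹. Let x : [0,1] → ℝ be differentiable with x(0) = 0 and x′(t) = ( α(t) − P(t)/λ(t) ) x(t) + β(t) + P(t) r(t)/λ(t) for all t ∈ [0,1]. Then x(1) = μ / (1 + γ). -/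
/-! The reference mean `r` solves `r' = α r + β`, so the deviation `x - r` solves the closed-loop
linear equation `y' = (α - P/λ) y`. Writing `P = (v² h)⁻¹` with `h(t) = σ⁻² + ∫_t^1 (λ v²)⁻¹`,
the product `v h` solves the same equation, so `(x - r) / (v h)` is constant on `[0, 1]`.
At `t = 0` we have `x - r = μ/σ` and `v h = (1 + γ)/σ²`; at `t = 1`, `r = 0` and `v h = 1/σ`. -/

open Set

lemma hasDerivWithinAt_integral_Icc_left {f : ℝ → ℝ} {a b t : ℝ} (hf : ContinuousOn f (Icc a b))
    (ht : t ∈ Icc a b) :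
    HasDerivWithinAt (fun s => ∫ u in s..b, f u) (-f t) (Icc a b) t := by
  have : Fact (t ∈ Icc a b) := ⟨ht⟩
  exact intervalIntegral.integral_hasDerivWithinAt_left
    ((hf.mono (uIcc_subset_Icc ht (right_mem_Icc.2 (ht.1.trans ht.2)))).intervalIntegrable)
    (hf.stronglyMeasurableAtFilter_nhdsWithin measurableSet_Icc t) (hf t ht)

theorem div_eq_div_of_hasDerivWithinAt_mul {a b : ℝ} {c y w : ℝ → ℝ} (hab : a ≤ b)
    (hy : ∀ t ∈ Icc a b, HasDerivWithinAt y (c t * y t) (Icc a b) t)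
    (hw : ∀ t ∈ Icc a b, HasDerivWithinAt w (c t * w t) (Icc a b) t)
    (hw0 : ∀ t ∈ Icc a b, w t ≠ 0) :
    y b / w b = y a / w a := by
  have hG : ∀ t ∈ Icc a b, HasDerivWithinAt (fun s => y s / w s) 0 (Icc a b) t := fun t ht => by
    refine ((hy t ht).div (hw t ht) (hw0 t ht)).congr_deriv ?_
    ring
  refine constant_of_derivWithin_zero (fun t ht => (hG t ht).differentiableWithinAt)
    (fun t ht => ?_) b (right_mem_Icc.2 hab)
  exact (hG t (Ico_subset_Icc_self ht)).derivWithin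
    (uniqueDiffOn_Icc (ht.1.trans_lt ht.2) t (Ico_subset_Icc_self ht))

lemma hasDerivAt_reference_mean {v α r : ℝ → ℝ} {μ σ t : ℝ}
    (hr : ∀ s, r s = -μ * (v s / σ - s)) (hv : HasDerivAt v (α t * v t) t) :
    HasDerivAt r (α t * r t + μ * (1 - t * α t)) t := by
  rw [show r = fun s => -μ * (v s / σ - s) from funext hr]
  refine (((hv.div_const σ).sub (hasDerivAt_id t)).const_mul (-μ)).congr_deriv ?_
  ring

lemma hasDerivWithinAt_mul_closedLoop {v h α lam P : ℝ → ℝ} {s : Set ℝ} {t : ℝ}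
    (hv : HasDerivWithinAt v (α t * v t) s t) (hh : HasDerivWithinAt h (-(lam t * v t ^ 2)⁻¹) s t)
    (hP : P t = (v t ^ 2 * h t)⁻¹) (hv0 : v t ≠ 0) (hh0 : h t ≠ 0) :
    HasDerivWithinAt (v * h) ((α t - P t / lam t) * (v * h) t) s t := by
  refine (hv.mul hh).congr_deriv ?_
  rw [hP, Pi.mul_apply]
  field_simp
  ring

/-- The standard deviation of `(1 - t) Z₀ + t σ Z₁` for independent standard Gaussians `Z₀, Z₁`. -/
noncomputable def interpStd (σ t : ℝ) : ℝ := √((1 - t) ^ 2 + t ^ 2 * σ ^ 2)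

section interpStd

variable {σ : ℝ}

lemma interpVar_pos (hσ : σ ≠ 0) (t : ℝ) : 0 < (1 - t) ^ 2 + t ^ 2 * σ ^ 2 := by
  rcases eq_or_ne t 0 with rfl | ht
  · norm_num
  · positivity

lemma interpStd_pos (hσ : σ ≠ 0) (t : ℝ) : 0 < interpStd σ t :=
  Real.sqrt_pos.2 (interpVar_pos hσ t)

@[simp] lemma interpStd_zero (σ : ℝ) : interpStd σ 0 = 1 := by
  simp [interpStd]

lemma interpStd_one (hσ : 0 ≤ σ) : interpStd σ 1 = σ := by
  simp [interpStd, Real.sqrt_sq hσ]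

lemma differentiable_interpStd (hσ : σ ≠ 0) : Differentiable ℝ (interpStd σ) :=
  (by fun_prop : Differentiable ℝ fun t : ℝ => (1 - t) ^ 2 + t ^ 2 * σ ^ 2).sqrt
    fun t => (interpVar_pos hσ t).ne'

end interpStd

/-- The paper's Riccati solution is `P t = (interpStd σ t ^ 2 * riccatiDenom σ lam t)⁻¹`. -/
noncomputable def riccatiDenom (σ : ℝ) (lam : ℝ → ℝ) (t : ℝ) : ℝ :=
  (σ ^ 2)⁻¹ + ∫ u in t..1, (lam u * interpStd σ u ^ 2)⁻¹

section riccatiDenom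

variable {σ : ℝ} {lam : ℝ → ℝ}

lemma riccatiDenom_one : riccatiDenom σ lam 1 = (σ ^ 2)⁻¹ := by
  simp [riccatiDenom]

lemma mul_interpStd_sq_pos (hσ : σ ≠ 0) (hlam : ∀ t ∈ Icc (0:ℝ) 1, 0 < lam t) {u : ℝ}
    (hu : u ∈ Icc (0:ℝ) 1) : 0 < lam u * interpStd σ u ^ 2 :=
  mul_pos (hlam u hu) (pow_pos (interpStd_pos hσ u) 2)

lemma riccatiDenom_pos (hσ : σ ≠ 0) (hlam : ∀ t ∈ Icc (0:ℝ) 1, 0 < lam t) {t : ℝ}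
    (ht : t ∈ Icc (0:ℝ) 1) : 0 < riccatiDenom σ lam t :=
  add_pos_of_pos_of_nonneg (by positivity) <| intervalIntegral.integral_nonneg ht.2
    fun u hu => (inv_pos.2 (mul_interpStd_sq_pos hσ hlam ⟨ht.1.trans hu.1, hu.2⟩)).le

lemma hasDerivWithinAt_riccatiDenom (hσ : σ ≠ 0) (hlam : ∀ t ∈ Icc (0:ℝ) 1, 0 < lam t)
    (hlamc : ContinuousOn lam (Icc 0 1)) {t : ℝ} (ht : t ∈ Icc (0:ℝ) 1) :
    HasDerivWithinAt (riccatiDenom σ lam) (-(lam t * interpStd σ t ^ 2)⁻¹) (Icc 0 1) t := by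
  have := (differentiable_interpStd hσ).continuous
  exact (hasDerivWithinAt_integral_Icc_left (ContinuousOn.inv₀ (by fun_prop)
    fun u hu => (mul_interpStd_sq_pos hσ hlam hu).ne') ht).const_add _

end riccatiDenom

theorem optimal_terminal_mean
    (σ : ℝ) (hσ : 0 < σ) (μ : ℝ)
    (lam : ℝ → ℝ) (hlamc : ContinuousOn lam (Icc 0 1))
    (hlam : ∀ t ∈ Icc (0:ℝ) 1, 0 < lam t)
    (v α β r P : ℝ → ℝ) (γ : ℝ)
    (hv : ∀ t, v t = Real.sqrt ((1 - t) ^ 2 + t ^ 2 * σ ^ 2))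
    (hα : ∀ t, α t = deriv v t / v t)
    (hβ : ∀ t, β t = μ * (1 - t * α t))
    (hr : ∀ t, r t = -μ * (v t / σ - t))
    (hγ : γ = σ ^ 2 * ∫ t in (0:ℝ)..1, (lam t * v t ^ 2)⁻¹)
    (hP : ∀ t, P t = (v t ^ 2 * ((σ ^ 2)⁻¹ + ∫ u in t..(1:ℝ), (lam u * v u ^ 2)⁻¹))⁻¹)
    (x : ℝ → ℝ) (hx0 : x 0 = 0)
    (hx : ∀ t ∈ Icc (0:ℝ) 1,
      HasDerivAt x ((α t - P t / lam t) * x t + β t + P t * r t / lam t) t) :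
    x 1 = μ / (1 + γ) := by
  obtain rfl : v = interpStd σ := funext hv
  have hv0 : ∀ t, interpStd σ t ≠ 0 := fun t => (interpStd_pos hσ.ne' t).ne'
  have hvα : ∀ t, HasDerivAt (interpStd σ) (α t * interpStd σ t) t := fun t => by
    rw [hα, div_mul_cancel₀ _ (hv0 t)]
    exact (differentiable_interpStd hσ.ne' t).hasDerivAt
  have hh0 : ∀ t ∈ Icc (0:ℝ) 1, riccatiDenom σ lam t ≠ 0 :=
    fun t ht => (riccatiDenom_pos hσ.ne' hlam ht).ne'
  have hy : ∀ t ∈ Icc (0:ℝ) 1,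
      HasDerivWithinAt (x - r) ((α t - P t / lam t) * (x - r) t) (Icc 0 1) t := fun t ht =>
    ((hx t ht).sub (hasDerivAt_reference_mean hr (hvα t))).hasDerivWithinAt.congr_deriv
      (by rw [hβ, Pi.sub_apply]; ring)
  have hw : ∀ t ∈ Icc (0:ℝ) 1, HasDerivWithinAt (interpStd σ * riccatiDenom σ lam)
      ((α t - P t / lam t) * (interpStd σ * riccatiDenom σ lam) t) (Icc 0 1) t := fun t ht =>
    hasDerivWithinAt_mul_closedLoop (hvα t).hasDerivWithinAt
      (hasDerivWithinAt_riccatiDenom hσ.ne' hlam hlamc ht) (hP t) (hv0 t) (hh0 t ht)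
  have key := div_eq_div_of_hasDerivWithinAt_mul zero_le_one hy hw
    fun t ht => mul_ne_zero (hv0 t) (hh0 t ht)
  have hd0 : riccatiDenom σ lam 0 = (1 + γ) / σ ^ 2 := by
    rw [riccatiDenom, hγ]
    field_simp
  have hγ0 : 0 < 1 + γ := by
    have := riccatiDenom_pos hσ.ne' hlam (left_mem_Icc.2 zero_le_one)
    rwa [hd0, div_pos_iff_of_pos_right (by positivity)] at this
  simp only [Pi.sub_apply, Pi.mul_apply, hr, hx0, hd0, riccatiDenom_one, interpStd_zero,
    interpStd_one hσ.le] at key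
  field_simp at key ⊢
  linear_combination key
end
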